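/- arXiv:2306.04489 — 6 statements merged into one kernel-verified Lean document; each statement's English description precedes it below -/
import Mathlib

section
/- Let p₁,…,pₙ be positive integers with sum s, let M > s be a real constant, and set αᵢ = pᵢ/s and βᵢ = (M − pᵢ/s)/(nM − 1). Then for a subset S ⊆ [n] with |S| = n/2 (n even), the two inequalities Σ_{i∈S} αᵢ ≥ 1/2 and Σ_{i∈S} βᵢ ≥ 1/2 hold simultaneously if and only if Σ_{i∈S} pᵢ = s/2. -/
/-- Key lemma of the NP-hardness reduction: for positive integers `p i` summing
to `s`, a real `M > s`, and `S ⊆ [n]` with `|S| = n/2`, the two inequalities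
`∑_{i∈S} αᵢ ≥ 1/2` and `∑_{i∈S} βᵢ ≥ 1/2` (where `αᵢ = pᵢ/s` and
`βᵢ = (M − pᵢ/s)/(nM − 1)`) hold simultaneously iff `∑_{i∈S} pᵢ = s/2`. -/
theorem fairness_scores_iff_partition (n : ℕ) (hn : 0 < n)
    (p : Fin n → ℕ) (hp : ∀ i, 0 < p i)
    (s : ℕ) (hs : s = ∑ i, p i)
    (M : ℝ) (hM : (s : ℝ) < M)
    (S : Finset (Fin n)) (hcard : 2 * S.card = n) :
    ((1 : ℝ) / 2 ≤ ∑ i ∈ S, (p i : ℝ) / s ∧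
      (1 : ℝ) / 2 ≤ ∑ i ∈ S, (M - (p i : ℝ) / s) / (n * M - 1)) ↔
      ∑ i ∈ S, (p i : ℝ) = s / 2 := by
  have hs0 : 0 < s := by
    rw [hs]
    exact Finset.sum_pos (fun i _ => hp i) ⟨⟨0, hn⟩, Finset.mem_univ _⟩
  have hsr : (0:ℝ) < s := by exact_mod_cast hs0
  have hns : (n:ℝ) ≤ s := by
    have h : n ≤ s := by
      rw [hs]
      calc n = ∑ _i : Fin n, 1 := by simp
        _ ≤ ∑ i, p i := Finset.sum_le_sum (fun i _ => hp i)
    exact_mod_cast h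
  have hn1 : (1:ℝ) ≤ n := by exact_mod_cast hn
  have hnM : (1:ℝ) < n * M := by nlinarith
  have hnM' : (0:ℝ) < n * M - 1 := by linarith
  have hsum1 : ∑ i ∈ S, (p i : ℝ) / s = (∑ i ∈ S, (p i:ℝ)) / s := by
    rw [Finset.sum_div]
  have hsum2 : ∑ i ∈ S, (M - (p i : ℝ) / s) / (n * M - 1)
      = ((S.card : ℝ) * M - (∑ i ∈ S, (p i:ℝ)) / s) / (n * M - 1) := by
    rw [← Finset.sum_div, Finset.sum_sub_distrib, Finset.sum_const, nsmul_eq_mul,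
      Finset.sum_div]
  rw [hsum1, hsum2]
  set T := ∑ i ∈ S, (p i : ℝ) with hT
  have hc : (2:ℝ) * S.card = n := by exact_mod_cast hcard
  constructor
  · rintro ⟨h1, h2⟩
    rw [le_div_iff₀ hsr] at h1
    rw [le_div_iff₀ hnM', ← hc] at h2
    have hhalf : T / s ≤ 1 / 2 := by linarith
    have hT2 : T ≤ 1 / 2 * s := (div_le_iff₀ hsr).mp hhalf
    linarith
  · intro h
    rw [h]
    constructor
    · rw [le_div_iff₀ hsr]
      linarith
    · rw [le_div_iff₀ hnM', ← hc]
      have hhalf : (s:ℝ) / 2 / s = 1 / 2 := by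
        field_simp
      rw [hhalf]
      linarith
end

section
/- There exists a set Z of n positive integers admitting a partition into two disjoint sets X, Y with X ∪ Y = Z, |X| = |Y|, and equal sums, if and only if the corresponding fair leverage-score instance (with αᵢ = pᵢ/s, βᵢ = (M − pᵢ/s)/(nM−1), threshold θ = 1/2, cardinality c = n/2) has a solution S ⊆ [n] with |S| = c, Σ_{i∈S} αᵢ ≥ θ, and Σ_{i∈S} βᵢ ≥ θ. -/
/-- Equal cardinality partition is a yes-instance iff the corresponding fair
leverage-score instance (with `αᵢ = pᵢ/s`, `βᵢ = (M − pᵢ/s)/(nM−1)`, threshold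
`θ = 1/2`, cardinality `c = n/2`) has a solution. -/
theorem eqCardPartition_iff_fairnessScores (n : ℕ) (hn : 0 < n) (hne : Even n)
    (p : Fin n → ℕ) (hp : ∀ i, 0 < p i)
    (s : ℕ) (hs : s = ∑ i, p i)
    (M : ℝ) (hM : (s : ℝ) < M) :
    (∃ X : Finset (Fin n), 2 * X.card = n ∧ ∑ i ∈ X, p i = ∑ i ∈ Xᶜ, p i) ↔
    (∃ S : Finset (Fin n), 2 * S.card = n ∧
      (1 : ℝ) / 2 ≤ ∑ i ∈ S, (p i : ℝ) / s ∧
      (1 : ℝ) / 2 ≤ ∑ i ∈ S, (M - (p i : ℝ) / s) / (n * M - 1)) := by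
  have hs0 : 0 < s := by
    subst hs
    exact Finset.sum_pos (fun i _ => hp i)
      (Finset.univ_nonempty_iff.2 ⟨⟨0, hn⟩⟩)
  have hsR : (0:ℝ) < s := by exact_mod_cast hs0
  have hs1 : (1:ℝ) ≤ s := by exact_mod_cast hs0
  have hM1 : (1:ℝ) < M := lt_of_le_of_lt hs1 hM
  have hn1 : (1:ℝ) ≤ n := by exact_mod_cast hn
  have hnM : (0:ℝ) < n * M - 1 := by nlinarith
  -- general computations of the two sums
  have hsum1 : ∀ S : Finset (Fin n),
      ∑ i ∈ S, (p i : ℝ) / s = (∑ i ∈ S, (p i : ℝ)) / s := by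
    intro S; rw [Finset.sum_div]
  have hsum2 : ∀ S : Finset (Fin n),
      ∑ i ∈ S, (M - (p i : ℝ) / s) / (n * M - 1)
        = ((S.card : ℝ) * M - (∑ i ∈ S, (p i : ℝ)) / s) / (n * M - 1) := by
    intro S
    rw [← Finset.sum_div, Finset.sum_sub_distrib, Finset.sum_const,
      nsmul_eq_mul, Finset.sum_div]
  have htot : ∀ S : Finset (Fin n),
      ∑ i ∈ S, p i + ∑ i ∈ Sᶜ, p i = s := by
    intro S
    rw [hs, Finset.sum_add_sum_compl]
  constructor
  · rintro ⟨X, hcard, hsum⟩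
    refine ⟨X, hcard, ?_, ?_⟩
    · have hA : 2 * ∑ i ∈ X, p i = s := by have := htot X; omega
      have hAR : 2 * ∑ i ∈ X, (p i : ℝ) = s := by exact_mod_cast hA
      rw [hsum1]
      rw [div_le_div_iff₀ (by norm_num) hsR]
      linarith
    · have hA : 2 * ∑ i ∈ X, p i = s := by have := htot X; omega
      have hAR : 2 * ∑ i ∈ X, (p i : ℝ) = s := by exact_mod_cast hA
      have hcR : 2 * (X.card : ℝ) = n := by exact_mod_cast hcard
      rw [hsum2]
      rw [div_le_div_iff₀ (by norm_num) hnM]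
      have : (∑ i ∈ X, (p i : ℝ)) / s = 1 / 2 := by
        rw [div_eq_div_iff hsR.ne' (by norm_num)]; linarith
      nlinarith
  · rintro ⟨S, hcard, h1, h2⟩
    have hcR : 2 * (S.card : ℝ) = n := by exact_mod_cast hcard
    rw [hsum1] at h1
    rw [hsum2] at h2
    have h1' : (s : ℝ) / 2 ≤ ∑ i ∈ S, (p i : ℝ) := by
      rw [div_le_div_iff₀ (by norm_num) hsR] at h1
      linarith
    have h2' : ∑ i ∈ S, (p i : ℝ) ≤ (s : ℝ) / 2 := by
      rw [div_le_div_iff₀ (by norm_num) hnM] at h2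
      have hdiv : (s:ℝ) * ((S.card : ℝ) * M - (∑ i ∈ S, (p i : ℝ)) / s)
          = (s:ℝ) * (S.card : ℝ) * M - ∑ i ∈ S, (p i : ℝ) := by
        field_simp
      have h2s := mul_le_mul_of_nonneg_left h2 hsR.le
      have hkey : (s:ℝ) * (n:ℝ) * M = 2 * (s:ℝ) * (S.card : ℝ) * M := by
        rw [← hcR]; ring
      nlinarith [h2s, hdiv, hkey]
    have heq : 2 * ∑ i ∈ S, (p i : ℝ) = s := by linarith
    have heqN : 2 * ∑ i ∈ S, p i = s := by exact_mod_cast heq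
    refine ⟨S, hcard, ?_⟩
    have := htot S
    omega
end

section
/- Let (α₁,β₁),…,(αₙ,βₙ) be nonnegative reals, θ > 0, and suppose there exists an optimal set S* ⊆ [n] with |S*| = c such that Σ_{i∈S*} αᵢ ≥ θ and Σ_{i∈S*} βᵢ ≥ θ. If indices i₁,…,i_c are chosen greedily to maximize αᵢ + βᵢ (i.e., they are the c indices with the largest values of αᵢ + βᵢ), and Σ_{j=1}^c β_{i_j} < θ, then Σ_{j=1}^c α_{i_j} ≥ θ. -/
/-- If `T` consists of the `c` indices with the largest pair sums `αᵢ + βᵢ`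
(the greedy phase of FairScoresSampler after `c` steps), some optimal set `S*`
of size `c` meets both thresholds, and the `β`-sum over `T` is below `θ`, then
the `α`-sum over `T` is at least `θ`. -/
theorem greedy_meets_alpha_threshold (n : ℕ) (α β : Fin n → ℝ)
    (hα : ∀ i, 0 ≤ α i) (hβ : ∀ i, 0 ≤ β i)
    (θ : ℝ) (hθ : 0 < θ) (c : ℕ)
    (Sstar : Finset (Fin n)) (hSc : Sstar.card = c)
    (hSα : θ ≤ ∑ i ∈ Sstar, α i) (hSβ : θ ≤ ∑ i ∈ Sstar, β i)
    (T : Finset (Fin n)) (hTc : T.card = c)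
    (hT : ∀ i ∈ T, ∀ j ∉ T, α j + β j ≤ α i + β i)
    (hTβ : ∑ i ∈ T, β i < θ) :
    θ ≤ ∑ i ∈ T, α i := by
  have hcard : (Sstar \ T).card = (T \ Sstar).card := by
    have h1 := Finset.card_sdiff_add_card_inter Sstar T
    have h2 := Finset.card_sdiff_add_card_inter T Sstar
    rw [Finset.inter_comm] at h2
    omega
  have e := Finset.equivOfCardEq hcard
  have key : ∑ i ∈ Sstar, (α i + β i) ≤ ∑ i ∈ T, (α i + β i) := by
    rw [← Finset.sum_inter_add_sum_sdiff Sstar T, ← Finset.sum_inter_add_sum_sdiff T Sstar,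
      Finset.inter_comm T Sstar]
    refine add_le_add_right ?_ _
    rw [← Finset.sum_coe_sort (Sstar \ T) (fun j => α j + β j),
        ← Finset.sum_coe_sort (T \ Sstar) (fun j => α j + β j),
        ← Equiv.sum_comp e (fun i => α i.1 + β i.1)]
    refine Finset.sum_le_sum fun j _ => ?_
    exact hT _ (Finset.mem_sdiff.1 (e j).2).1 _ (Finset.mem_sdiff.1 j.2).2
  rw [Finset.sum_add_distrib, Finset.sum_add_distrib] at key
  have h2θ : 2 * θ ≤ ∑ i ∈ T, α i + ∑ i ∈ T, β i := by linarith
  linarith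
end

section
/- In the setting of the FairScoresSampler analysis, the stopping time t of the greedy phase satisfies t ≤ c, where c is the optimal solution cardinality. -/
lemma fin_strictMono_le {k n : ℕ} (f : Fin k → Fin n) (hf : StrictMono f) :
    ∀ m (h : m < k), m ≤ (f ⟨m, h⟩ : ℕ) := by
  intro m
  induction m with
  | zero => intro h; exact Nat.zero_le _
  | succ m ih =>
    intro h
    have hm : m < k := Nat.lt_of_succ_lt h
    have h1 : f ⟨m, hm⟩ < f ⟨m + 1, h⟩ := hf (by simp [Fin.lt_def])
    have := ih hm
    omega

lemma top_sum {n : ℕ} (g : Fin n → ℝ) (hg : Antitone g) (S : Finset (Fin n)) :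
    ∑ i ∈ S, g i ≤ ∑ j ∈ Finset.univ.filter (fun j : Fin n => (j : ℕ) < S.card), g j := by
  set k := S.card with hk
  have hkn : k ≤ n := by
    simpa using (Finset.card_le_card (Finset.subset_univ S))
  set e := S.orderEmbOfFin hk.symm with he
  have hSmap : S = Finset.univ.map e.toEmbedding := by
    ext x
    simp only [Finset.mem_map, Finset.mem_univ, true_and]
    constructor
    · intro hx
      have : x ∈ Set.range e := by rw [S.range_orderEmbOfFin hk.symm]; exact hx
      exact this
    · rintro ⟨i, rfl⟩; exact S.orderEmbOfFin_mem hk.symm i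
  have hFmap : Finset.univ.filter (fun j : Fin n => (j : ℕ) < k)
      = Finset.univ.map (Fin.castLEEmb hkn) := by
    ext x
    simp only [Finset.mem_filter, Finset.mem_univ, true_and, Finset.mem_map,
      Fin.castLEEmb_apply]
    constructor
    · intro hx; exact ⟨⟨(x : ℕ), hx⟩, by ext; simp⟩
    · rintro ⟨i, rfl⟩; simpa using i.2
  rw [hSmap, hFmap, Finset.sum_map, Finset.sum_map]
  apply Finset.sum_le_sum
  intro i _
  apply hg
  have : (i : ℕ) ≤ (e i : ℕ) := by
    have := fin_strictMono_le e e.strictMono (i : ℕ) i.2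
    simpa using this
  simpa [Fin.le_def] using this

/-- The stopping time `t` of the greedy phase of FairScoresSampler (picking
indices in decreasing order of pair sum `αᵢ + βᵢ`, stopping as soon as the
partial sum of `α`'s or of `β`'s reaches `θ`) is at most the optimal solution
cardinality `c`. -/
theorem greedy_stopping_time_le_opt (n : ℕ) (α β : Fin n → ℝ)
    (hα : ∀ i, 0 ≤ α i) (hβ : ∀ i, 0 ≤ β i)
    (θ : ℝ) (hθ : 0 < θ) (c : ℕ)
    (Sstar : Finset (Fin n)) (hSc : Sstar.card = c)
    (hSα : θ ≤ ∑ i ∈ Sstar, α i) (hSβ : θ ≤ ∑ i ∈ Sstar, β i)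
    (σ : Equiv.Perm (Fin n))
    (hσ : Antitone fun j => α (σ j) + β (σ j)) :
    sInf {t : ℕ |
      θ ≤ ∑ j ∈ Finset.univ.filter (fun j : Fin n => (j : ℕ) < t), α (σ j) ∨
      θ ≤ ∑ j ∈ Finset.univ.filter (fun j : Fin n => (j : ℕ) < t), β (σ j)} ≤ c := by
  apply Nat.sInf_le
  -- the preimage of Sstar under σ
  set S' : Finset (Fin n) := Sstar.map σ.symm.toEmbedding with hS'
  have hS'card : S'.card = c := by simp [hS', hSc]
  have hsum : ∑ i ∈ Sstar, (α i + β i) = ∑ j ∈ S', (α (σ j) + β (σ j)) := by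
    rw [hS', Finset.sum_map]
    simp
  have key : ∑ i ∈ Sstar, (α i + β i)
      ≤ ∑ j ∈ Finset.univ.filter (fun j : Fin n => (j : ℕ) < c), (α (σ j) + β (σ j)) := by
    rw [hsum]
    have := top_sum (fun j => α (σ j) + β (σ j)) hσ S'
    rwa [hS'card] at this
  rw [Finset.sum_add_distrib, Finset.sum_add_distrib] at key
  have h2θ : 2 * θ ≤ ∑ i ∈ Sstar, α i + ∑ i ∈ Sstar, β i := by linarith
  by_contra hcon
  simp only [Set.mem_setOf_eq, not_or, not_le] at hcon
  linarith [hcon.1, hcon.2]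
end

section
/- For the block matrix M = diag(A,B) with rank(A) = rank(B) = n, any selection of fewer than 2k columns of M achieves min-max normalized loss at least min{ (Σ_{i=k}^n σᵢ(A)²)/(Σ_{i=k+1}^n σᵢ(A)²), (Σ_{i=k}^n σᵢ(B)²)/(Σ_{i=k+1}^n σᵢ(B)²) } in squared Frobenius norm, which is unbounded as σ_k(A)/σ_{k+1}(A) → ∞ (or similarly for B). -/
open Matrix

/-- Frobenius norm of a real matrix. -/
noncomputable def frob {m n : Type*} [Fintype m] [Fintype n]
    (A : Matrix m n ℝ) : ℝ :=
  Real.sqrt (∑ i, ∑ j, A i j ^ 2)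

/-- `Ap` satisfies the Moore–Penrose conditions for `A`. -/
def IsMoorePenrose {m n : Type*} [Fintype m] [Fintype n]
    (A : Matrix m n ℝ) (Ap : Matrix n m ℝ) : Prop :=
  A * Ap * A = A ∧ Ap * A * Ap = Ap ∧ (A * Ap)ᵀ = A * Ap ∧ (Ap * A)ᵀ = Ap * A

/-- `σ` is the antitone vector of singular values of `A`. -/
def IsSingularValues {m n : Type*} [Fintype m] [Fintype n] [DecidableEq n]
    (A : Matrix m n ℝ) (σ : n → ℝ) [LinearOrder n] : Prop :=
  Antitone σ ∧ (∀ i, 0 ≤ σ i) ∧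
    ∃ V : Matrix n n ℝ, Vᵀ * V = 1 ∧
      Aᵀ * A = V * Matrix.diagonal (fun i => σ i ^ 2) * Vᵀ

lemma frob_sq {m n : Type*} [Fintype m] [Fintype n] (M : Matrix m n ℝ) :
    frob M ^ 2 = (Mᵀ * M).trace := by
  have h : (Mᵀ * M).trace = ∑ i, ∑ j, M i j ^ 2 := by
    rw [Matrix.trace]
    simp only [Matrix.diag_apply, Matrix.mul_apply, Matrix.transpose_apply, sq]
    rw [Finset.sum_comm]
  rw [frob, Real.sq_sqrt, h]
  exact Finset.sum_nonneg fun i _ => Finset.sum_nonneg fun j _ => sq_nonneg _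

lemma diag_transpose_mul {m n : Type*} [Fintype m] [Fintype n] (M : Matrix m n ℝ) (i : n) :
    (Mᵀ * M) i i = ∑ j, (M j i) ^ 2 := by
  simp [Matrix.mul_apply, Matrix.transpose_apply, sq]

lemma diag_transpose_mul_nonneg {m n : Type*} [Fintype m] [Fintype n] (M : Matrix m n ℝ) (i : n) :
    0 ≤ (Mᵀ * M) i i := by
  rw [diag_transpose_mul]
  exact Finset.sum_nonneg fun j _ => sq_nonneg _

lemma trace_transpose_mul_nonneg {m n : Type*} [Fintype m] [Fintype n] (M : Matrix m n ℝ) :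
    0 ≤ (Mᵀ * M).trace :=
  Finset.sum_nonneg fun i _ => diag_transpose_mul_nonneg M i

lemma trace_proj_mul_nonneg {m : Type*} [Fintype m] {P Q : Matrix m m ℝ}
    (hPs : Pᵀ = P) (hPi : P * P = P) (hQs : Qᵀ = Q) (hQi : Q * Q = Q) :
    0 ≤ (P * Q).trace := by
  have h : ((Q * P)ᵀ * (Q * P)).trace = (P * Q).trace := by
    rw [Matrix.transpose_mul, hPs, hQs]
    calc (P * Q * (Q * P)).trace
        = (P * (Q * Q) * P).trace := by rw [Matrix.mul_assoc, Matrix.mul_assoc, Matrix.mul_assoc]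
      _ = (P * Q * P).trace := by rw [hQi]
      _ = (P * (Q * P)).trace := by rw [Matrix.mul_assoc]
      _ = ((Q * P) * P).trace := by rw [Matrix.trace_mul_comm]
      _ = (Q * (P * P)).trace := by rw [Matrix.mul_assoc]
      _ = (Q * P).trace := by rw [hPi]
      _ = (P * Q).trace := by rw [Matrix.trace_mul_comm]
  rw [← h]
  exact trace_transpose_mul_nonneg _

lemma trace_proj_le {m : Type*} [Fintype m] [DecidableEq m] {P Q : Matrix m m ℝ}
    (hPs : Pᵀ = P) (hPi : P * P = P) (hQs : Qᵀ = Q) (hQi : Q * Q = Q)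
    (hQP : Q * P = P) : P.trace ≤ Q.trace := by
  have h1s : (1 - P)ᵀ = 1 - P := by
    rw [Matrix.transpose_sub, Matrix.transpose_one, hPs]
  have h1i : (1 - P) * (1 - P) = 1 - P := by
    simp only [Matrix.mul_sub, Matrix.sub_mul, hPi, Matrix.mul_one, Matrix.one_mul]
    abel
  have h := trace_proj_mul_nonneg hQs hQi h1s h1i
  rw [Matrix.mul_sub, Matrix.mul_one, hQP, Matrix.trace_sub] at h
  linarith

lemma mulVec_injective_of_rank {m n : ℕ} (A : Matrix (Fin m) (Fin n) ℝ)
    (hA : A.rank = n) : Function.Injective A.mulVec := by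
  have h1 : Module.finrank ℝ (LinearMap.range A.mulVecLin) = n := hA
  have h2 := LinearMap.finrank_range_add_finrank_ker A.mulVecLin
  rw [h1, Module.finrank_pi] at h2
  simp only [Fintype.card_fin] at h2
  have h3 : Module.finrank ℝ (LinearMap.ker A.mulVecLin) = 0 := by omega
  have h4 : LinearMap.ker A.mulVecLin = ⊥ := Submodule.finrank_eq_zero.mp h3
  have h5 : Function.Injective A.mulVecLin := LinearMap.ker_eq_bot.mp h4
  intro x y hxy
  exact h5 (by simpa [Matrix.mulVecLin_apply] using hxy)

lemma sigma_pos {m n : ℕ} (A : Matrix (Fin m) (Fin n) ℝ)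
    (hinj : Function.Injective A.mulVec)
    (σ : Fin n → ℝ) (hσ : IsSingularValues A σ) : ∀ i, 0 < σ i := by
  obtain ⟨hmono, hnn, V, hV, hAA⟩ := hσ
  intro i
  rcases (hnn i).lt_or_eq with h | h
  · exact h
  exfalso
  have hW : (A * V)ᵀ * (A * V) = Matrix.diagonal (fun i => σ i ^ 2) := by
    rw [Matrix.transpose_mul]
    calc Vᵀ * Aᵀ * (A * V) = Vᵀ * (Aᵀ * A) * V := by simp only [Matrix.mul_assoc]
      _ = (Vᵀ * V) * Matrix.diagonal (fun i => σ i ^ 2) * (Vᵀ * V) := by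
          rw [hAA]; simp only [Matrix.mul_assoc]
      _ = Matrix.diagonal (fun i => σ i ^ 2) := by
          rw [hV, Matrix.one_mul, Matrix.mul_one]
  have hcol : ∀ l, (A * V) l i = 0 := by
    have h1 : ((A * V)ᵀ * (A * V)) i i = 0 := by
      rw [hW, Matrix.diagonal_apply_eq, ← h]; ring
    rw [diag_transpose_mul] at h1
    intro l
    have h2 := (Finset.sum_eq_zero_iff_of_nonneg
      (fun j _ => sq_nonneg ((A * V) j i))).mp h1 l (Finset.mem_univ l)
    exact pow_eq_zero_iff (two_ne_zero) |>.mp h2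
  have hmv : A.mulVec (fun c => V c i) = 0 := by
    funext l
    have h3 : (A * V) l i = A.mulVec (fun c => V c i) l := by
      simp [Matrix.mul_apply, Matrix.mulVec, dotProduct]
    simp only [Pi.zero_apply]
    rw [← h3, hcol l]
  have hz : (fun c => V c i) = (0 : Fin n → ℝ) := by
    apply hinj
    rw [hmv, Matrix.mulVec_zero]
  have h1 : (Vᵀ * V) i i = 1 := by rw [hV, Matrix.one_apply_eq]
  rw [diag_transpose_mul] at h1
  have h4 : ∀ j, V j i = 0 := fun j => congrFun hz j
  simp [h4] at h1

lemma trace_CCp_le {m r n : ℕ} {ι : Type} [Fintype ι] [DecidableEq ι]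
    (A : Matrix (Fin m) (Fin n) ℝ) (hAinj : Function.Injective A.mulVec)
    (φ : ι → Fin n) (hφ : Function.Injective φ)
    (C : Matrix (Fin m) (Fin r) ℝ) (Km : Matrix ι (Fin r) ℝ)
    (hC : C = A.submatrix id φ * Km)
    (Cp : Matrix (Fin r) (Fin m) ℝ) (hMP : IsMoorePenrose C Cp) :
    (C * Cp).trace ≤ (Fintype.card ι : ℝ) := by
  obtain ⟨D, hD⟩ : ∃ D : Matrix (Fin m) ι ℝ, D = A.submatrix id φ := ⟨_, rfl⟩
  have hDzero : ∀ x : ι → ℝ, D.mulVec x = 0 → x = 0 := by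
    intro x hx
    have hy : D.mulVec x = A.mulVec (fun c => ∑ j, if φ j = c then x j else 0) := by
      funext l
      rw [hD]
      simp only [Matrix.mulVec, dotProduct, Matrix.submatrix_apply, id_eq,
        Finset.mul_sum, mul_ite, mul_zero]
      rw [Finset.sum_comm]
      simp [Finset.sum_ite_eq]
    have hy0 : (fun c => ∑ j, if φ j = c then x j else 0) = (0 : Fin n → ℝ) := by
      apply hAinj
      rw [← hy, hx, Matrix.mulVec_zero]
    funext j
    have h5 := congrFun hy0 (φ j)
    simp only [Pi.zero_apply] at h5 ⊢
    rw [← h5]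
    simp [hφ.eq_iff, Finset.sum_ite_eq']
  have hDinj : LinearMap.ker D.mulVecLin = ⊥ := by
    rw [LinearMap.ker_eq_bot']
    intro x hx
    exact hDzero x hx
  have hGinj : Function.Injective (Dᵀ * D).mulVec := by
    have h6 : LinearMap.ker (Dᵀ * D).mulVecLin = ⊥ := by
      rw [Matrix.ker_mulVecLin_transpose_mul_self, hDinj]
    exact LinearMap.ker_eq_bot.mp h6
  have hunit : IsUnit (Dᵀ * D) := Matrix.mulVec_injective_iff_isUnit.mp hGinj
  have hdet : IsUnit (Dᵀ * D).det := (Matrix.isUnit_iff_isUnit_det _).mp hunit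
  obtain ⟨G, hG⟩ : ∃ G : Matrix ι ι ℝ, G = (Dᵀ * D)⁻¹ := ⟨_, rfl⟩
  have hinv1 : (Dᵀ * D) * G = 1 := by rw [hG]; exact Matrix.mul_nonsing_inv _ hdet
  have hinv2 : G * (Dᵀ * D) = 1 := by rw [hG]; exact Matrix.nonsing_inv_mul _ hdet
  have hGs : Gᵀ = G := by
    rw [hG, Matrix.transpose_nonsing_inv, Matrix.transpose_mul, Matrix.transpose_transpose]
  obtain ⟨Q, hQ⟩ : ∃ Q : Matrix (Fin m) (Fin m) ℝ, Q = D * G * Dᵀ := ⟨_, rfl⟩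
  have hQs : Qᵀ = Q := by
    rw [hQ, Matrix.transpose_mul, Matrix.transpose_mul, Matrix.transpose_transpose, hGs,
      Matrix.mul_assoc]
  have hQD : Q * D = D := by
    calc Q * D = D * (G * (Dᵀ * D)) := by rw [hQ]; simp only [Matrix.mul_assoc]
      _ = D := by rw [hinv2, Matrix.mul_one]
  have hQi : Q * Q = Q := by
    calc Q * Q = D * G * (Dᵀ * D) * (G * Dᵀ) := by rw [hQ]; simp only [Matrix.mul_assoc]
      _ = D * (G * (Dᵀ * D)) * (G * Dᵀ) := by simp only [Matrix.mul_assoc]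
      _ = D * (G * Dᵀ) := by rw [hinv2, Matrix.mul_one]
      _ = Q := by rw [hQ, Matrix.mul_assoc]
  have htrQ : Q.trace = (Fintype.card ι : ℝ) := by
    rw [hQ, Matrix.trace_mul_comm, ← Matrix.mul_assoc, hinv1, Matrix.trace_one]
  have hPis : (C * Cp)ᵀ = C * Cp := hMP.2.2.1
  have hPii : (C * Cp) * (C * Cp) = C * Cp := by
    calc (C * Cp) * (C * Cp) = (C * Cp * C) * Cp := by simp only [Matrix.mul_assoc]
      _ = C * Cp := by rw [hMP.1]
  have hQC : Q * C = C := by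
    rw [hC, ← hD, ← Matrix.mul_assoc, hQD]
  have hQPi : Q * (C * Cp) = C * Cp := by
    rw [← Matrix.mul_assoc, hQC]
  have := trace_proj_le hPis hPii hQs hQi hQPi
  rw [htrQ] at this
  exact this


lemma key {m n k : ℕ} (hkn : k < n)
    (A : Matrix (Fin m) (Fin n) ℝ) (σ : Fin n → ℝ)
    (hmono : Antitone σ) (hpos : ∀ i, 0 < σ i)
    (V : Matrix (Fin n) (Fin n) ℝ) (hV : Vᵀ * V = 1)
    (hAA : Aᵀ * A = V * Matrix.diagonal (fun i => σ i ^ 2) * Vᵀ)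
    (P : Matrix (Fin m) (Fin m) ℝ) (hPs : Pᵀ = P) (hPi : P * P = P)
    (htr : P.trace ≤ (k : ℝ)) :
    ∑ i ∈ Finset.univ.filter (fun i : Fin n => k ≤ (i : ℕ)), σ i ^ 2
      ≤ frob (A - P * A) ^ 2 := by
  have hσne : ∀ i, σ i ≠ 0 := fun i => (hpos i).ne'
  set D : Matrix (Fin n) (Fin n) ℝ := Matrix.diagonal (fun i => σ i ^ 2) with hD
  have hVV : V * Vᵀ = 1 := mul_eq_one_comm.mp hV
  obtain ⟨U, hU⟩ : ∃ U : Matrix (Fin m) (Fin n) ℝ,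
      U = A * V * Matrix.diagonal (fun i => (σ i)⁻¹) := ⟨_, rfl⟩
  have hdd : Matrix.diagonal (fun i => (σ i)⁻¹) * (D * Matrix.diagonal (fun i => (σ i)⁻¹)) = 1 := by
    rw [hD, Matrix.diagonal_mul_diagonal, Matrix.diagonal_mul_diagonal]
    rw [show (fun i => (σ i)⁻¹ * (σ i ^ 2 * (σ i)⁻¹)) = fun _ => (1:ℝ) from
      funext fun i => by
        rw [sq, show (σ i)⁻¹ * (σ i * σ i * (σ i)⁻¹) =
          ((σ i)⁻¹ * σ i) * (σ i * (σ i)⁻¹) by ring,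
          inv_mul_cancel₀ (hσne i), mul_inv_cancel₀ (hσne i), one_mul]]
    exact Matrix.diagonal_one
  have hVc : ∀ X : Matrix (Fin n) (Fin n) ℝ, Vᵀ * (V * X) = X := fun X => by
    rw [← Matrix.mul_assoc, hV, Matrix.one_mul]
  have hAc : ∀ X : Matrix (Fin n) (Fin n) ℝ,
      Aᵀ * (A * X) = V * (D * (Vᵀ * X)) := fun X => by
    rw [← Matrix.mul_assoc, hAA]; simp only [Matrix.mul_assoc]
  have hUU : Uᵀ * U = 1 := by
    rw [hU]
    simp only [Matrix.transpose_mul, Matrix.diagonal_transpose, Matrix.mul_assoc]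
    rw [hAc, hVc, hVc]
    exact hdd
  have hAfact : A = U * Matrix.diagonal σ * Vᵀ := by
    rw [hU]
    rw [Matrix.mul_assoc (A * V), Matrix.diagonal_mul_diagonal]
    rw [show (fun i => (σ i)⁻¹ * σ i) = fun _ => (1:ℝ) from
      funext fun i => inv_mul_cancel₀ (hσne i)]
    rw [Matrix.diagonal_one, Matrix.mul_one, Matrix.mul_assoc, hVV, Matrix.mul_one]
  obtain ⟨p, hp⟩ : ∃ p : Fin n → ℝ, p = fun i => (Uᵀ * P * U) i i := ⟨_, rfl⟩
  have hPU : Uᵀ * P * U = (P * U)ᵀ * (P * U) := by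
    rw [Matrix.transpose_mul, hPs]
    calc Uᵀ * P * U = Uᵀ * (P * P) * U := by rw [hPi]
      _ = Uᵀ * P * (P * U) := by simp only [Matrix.mul_assoc]
  have hppos : ∀ i, 0 ≤ p i := by
    intro i
    simp only [hp, hPU]
    exact diag_transpose_mul_nonneg _ _
  have hEs : (1 - P)ᵀ = 1 - P := by rw [Matrix.transpose_sub, Matrix.transpose_one, hPs]
  have hEi : (1 - P) * (1 - P) = 1 - P := by
    simp only [Matrix.mul_sub, Matrix.sub_mul, hPi, Matrix.mul_one, Matrix.one_mul]
    abel
  have hEU : Uᵀ * (1 - P) * U = 1 - Uᵀ * P * U := by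
    rw [Matrix.mul_sub, Matrix.mul_one, Matrix.sub_mul, hUU]
  have hple : ∀ i, p i ≤ 1 := by
    intro i
    have h1 : Uᵀ * (1 - P) * U = ((1 - P) * U)ᵀ * ((1 - P) * U) := by
      rw [Matrix.transpose_mul, hEs]
      calc Uᵀ * (1 - P) * U = Uᵀ * ((1 - P) * (1 - P)) * U := by rw [hEi]
        _ = Uᵀ * (1 - P) * ((1 - P) * U) := by simp only [Matrix.mul_assoc]
    have h2 : 0 ≤ ((1 : Matrix (Fin n) (Fin n) ℝ) - Uᵀ * P * U) i i := by
      rw [← hEU, h1]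
      exact diag_transpose_mul_nonneg _ _
    simp only [Matrix.sub_apply, Matrix.one_apply_eq] at h2
    simp only [hp]
    linarith [h2]
  have hUUs : (1 - U * Uᵀ)ᵀ = 1 - U * Uᵀ := by
    rw [Matrix.transpose_sub, Matrix.transpose_one, Matrix.transpose_mul,
      Matrix.transpose_transpose]
  have hUUi : (1 - U * Uᵀ) * (1 - U * Uᵀ) = 1 - U * Uᵀ := by
    have : (U * Uᵀ) * (U * Uᵀ) = U * Uᵀ := by
      calc (U * Uᵀ) * (U * Uᵀ) = U * (Uᵀ * U) * Uᵀ := by simp only [Matrix.mul_assoc]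
        _ = U * Uᵀ := by rw [hUU, Matrix.mul_one]
    simp only [Matrix.mul_sub, Matrix.sub_mul, this, Matrix.mul_one, Matrix.one_mul]
    abel
  have hsump : ∑ i, p i ≤ (k : ℝ) := by
    have h1 : ∑ i, p i = (Uᵀ * P * U).trace := by
      simp only [hp]; rfl
    have h2 : (Uᵀ * P * U).trace = (P * (U * Uᵀ)).trace := by
      rw [Matrix.mul_assoc, Matrix.trace_mul_comm, Matrix.mul_assoc]
    have h3 : 0 ≤ (P * (1 - U * Uᵀ)).trace := trace_proj_mul_nonneg hPs hPi hUUs hUUi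
    rw [Matrix.mul_sub, Matrix.mul_one, Matrix.trace_sub] at h3
    rw [h1, h2]
    linarith
  -- frobenius side
  have hEA : A - P * A = (1 - P) * A := by rw [Matrix.sub_mul, Matrix.one_mul]
  have hfrob : frob (A - P * A) ^ 2 = ∑ i, σ i ^ 2 * (1 - p i) := by
    rw [hEA, frob_sq]
    have h1 : ((1 - P) * A)ᵀ * ((1 - P) * A) = Aᵀ * ((1 - P) * A) := by
      rw [Matrix.transpose_mul, hEs]
      calc Aᵀ * (1 - P) * ((1 - P) * A) = Aᵀ * ((1 - P) * (1 - P)) * A := by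
            simp only [Matrix.mul_assoc]
        _ = Aᵀ * ((1 - P) * A) := by rw [hEi, Matrix.mul_assoc]
    rw [h1]
    have h2 : Aᵀ * ((1 - P) * A) =
        V * (Matrix.diagonal σ * (Uᵀ * (1 - P) * U) * Matrix.diagonal σ) * Vᵀ := by
      conv_lhs => rw [hAfact]
      rw [Matrix.transpose_mul, Matrix.transpose_mul, Matrix.transpose_transpose,
        Matrix.diagonal_transpose]
      simp only [Matrix.mul_assoc]
    rw [h2]
    have h3 : (V * (Matrix.diagonal σ * (Uᵀ * (1 - P) * U) * Matrix.diagonal σ) * Vᵀ).trace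
        = (Matrix.diagonal σ * (Uᵀ * (1 - P) * U) * Matrix.diagonal σ).trace := by
      rw [Matrix.trace_mul_comm, ← Matrix.mul_assoc, hV, Matrix.one_mul]
    rw [h3, hEU]
    rw [Matrix.trace]
    apply Finset.sum_congr rfl
    intro i _
    simp only [Matrix.diag_apply, Matrix.mul_diagonal, Matrix.diagonal_mul,
      Matrix.sub_apply, Matrix.one_apply_eq]
    simp only [hp]
    ring
  rw [hfrob]
  -- rearrangement
  set S := Finset.univ.filter (fun i : Fin n => k ≤ (i : ℕ)) with hS
  set Sc := Finset.univ.filter (fun i : Fin n => ¬ k ≤ (i : ℕ)) with hSc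
  have hsplit : ∀ f : Fin n → ℝ, ∑ i, f i = ∑ i ∈ S, f i + ∑ i ∈ Sc, f i :=
    fun f => (Finset.sum_filter_add_sum_filter_not Finset.univ _ f).symm
  have hcard : (Sc.card : ℝ) = (k : ℝ) := by
    have heq : Sc = Finset.Iio (⟨k, hkn⟩ : Fin n) := by
      rw [hSc]; ext i
      simp [Fin.lt_def, Nat.not_le]
    rw [heq, Fin.card_Iio]
  set c : ℝ := σ (⟨k, hkn⟩ : Fin n) ^ 2 with hc
  have hcnn : 0 ≤ c := sq_nonneg _
  have hbound1 : ∑ i ∈ S, σ i ^ 2 * p i ≤ c * ∑ i ∈ S, p i := by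
    rw [Finset.mul_sum]
    apply Finset.sum_le_sum
    intro i hi
    have hik : k ≤ (i : ℕ) := (Finset.mem_filter.mp hi).2
    have : σ i ≤ σ ⟨k, hkn⟩ := hmono (by rwa [Fin.le_def])
    have hσi : σ i ^ 2 ≤ c := by
      rw [hc]
      exact pow_le_pow_left₀ (hpos i).le this 2
    exact mul_le_mul_of_nonneg_right hσi (hppos i)
  have hbound2 : c * ∑ i ∈ Sc, (1 - p i) ≤ ∑ i ∈ Sc, σ i ^ 2 * (1 - p i) := by
    rw [Finset.mul_sum]
    apply Finset.sum_le_sum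
    intro i hi
    have hik : (i : ℕ) < k := by
      have := (Finset.mem_filter.mp hi).2; omega
    have : σ ⟨k, hkn⟩ ≤ σ i := hmono (by rw [Fin.le_def]; exact hik.le)
    have hσi : c ≤ σ i ^ 2 := by
      rw [hc]
      exact pow_le_pow_left₀ (hpos _).le this 2
    have h1p : 0 ≤ 1 - p i := by linarith [hple i]
    exact mul_le_mul_of_nonneg_right hσi h1p
  have hsum_split := hsplit p
  have hpS : 0 ≤ ∑ i ∈ S, p i := Finset.sum_nonneg fun i _ => hppos i
  have hScsum : ∑ i ∈ Sc, (1 - p i) = (k : ℝ) - ∑ i ∈ Sc, p i := by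
    rw [Finset.sum_sub_distrib, Finset.sum_const, nsmul_eq_mul, mul_one, hcard]
  have hkey : c * ∑ i ∈ S, p i ≤ c * ((k : ℝ) - ∑ i ∈ Sc, p i) := by
    apply mul_le_mul_of_nonneg_left _ hcnn
    linarith
  calc ∑ i ∈ S, σ i ^ 2
      = ∑ i ∈ S, σ i ^ 2 * (1 - p i) + ∑ i ∈ S, σ i ^ 2 * p i := by
        rw [← Finset.sum_add_distrib]
        apply Finset.sum_congr rfl
        intro i _; ring
    _ ≤ ∑ i ∈ S, σ i ^ 2 * (1 - p i) + c * ∑ i ∈ S, p i := by linarith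
    _ ≤ ∑ i ∈ S, σ i ^ 2 * (1 - p i) + c * ((k : ℝ) - ∑ i ∈ Sc, p i) := by linarith
    _ = ∑ i ∈ S, σ i ^ 2 * (1 - p i) + c * ∑ i ∈ Sc, (1 - p i) := by rw [hScsum]
    _ ≤ ∑ i ∈ S, σ i ^ 2 * (1 - p i) + ∑ i ∈ Sc, σ i ^ 2 * (1 - p i) := by linarith
    _ = ∑ i, σ i ^ 2 * (1 - p i) := (hsplit _).symm

lemma side_bound {mA n r k : ℕ} (hkn : k < n)
    (A : Matrix (Fin mA) (Fin n) ℝ) (hA : A.rank = n)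
    (σ : Fin n → ℝ) (hσ : IsSingularValues A σ)
    {ι : Type} [Fintype ι] [DecidableEq ι]
    (φ : ι → Fin n) (hφ : Function.Injective φ)
    (hcard : Fintype.card ι ≤ k - 1)
    (C : Matrix (Fin mA) (Fin r) ℝ) (Km : Matrix ι (Fin r) ℝ)
    (hC : C = A.submatrix id φ * Km)
    (Cp : Matrix (Fin r) (Fin mA) ℝ) (hMP : IsMoorePenrose C Cp) :
    ∑ i ∈ Finset.univ.filter (fun i : Fin n => k - 1 ≤ (i : ℕ)), σ i ^ 2
      ≤ frob (A - C * Cp * A) ^ 2 := by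
  have hAinj := mulVec_injective_of_rank A hA
  have hpos := sigma_pos A hAinj σ hσ
  obtain ⟨hmono, hnn, V, hV, hAA⟩ := hσ
  have htr : (C * Cp).trace ≤ ((k - 1 : ℕ) : ℝ) :=
    le_trans (trace_CCp_le A hAinj φ hφ C Km hC Cp hMP) (by exact_mod_cast hcard)
  have hkn' : k - 1 < n := lt_of_le_of_lt (Nat.sub_le k 1) hkn
  have hPii : (C * Cp) * (C * Cp) = C * Cp := by
    calc (C * Cp) * (C * Cp) = (C * Cp * C) * Cp := by simp only [Matrix.mul_assoc]
      _ = C * Cp := by rw [hMP.1]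
  exact key hkn' A σ hmono hpos V hV hAA (C * Cp) hMP.2.2.1 hPii htr

/-- For `M = diag(A, B)` with `rank A = rank B = n`, any selection of fewer
than `2k` columns achieves min-max normalized squared loss at least
`min{ (Σ_{i=k}^n σᵢ(A)²)/(Σ_{i=k+1}^n σᵢ(A)²),
      (Σ_{i=k}^n σᵢ(B)²)/(Σ_{i=k+1}^n σᵢ(B)²) }`. -/
theorem minmax_loss_lower_bound (mA mB n k r : ℕ) (hk : 1 ≤ k) (hkn : k < n)
    (hr : r < 2 * k)
    (A : Matrix (Fin mA) (Fin n) ℝ) (B : Matrix (Fin mB) (Fin n) ℝ)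
    (hA : A.rank = n) (hB : B.rank = n)
    (σA σB : Fin n → ℝ)
    (hσA : IsSingularValues A σA) (hσB : IsSingularValues B σB)
    (sel : Fin r → Fin n ⊕ Fin n) (hsel : Function.Injective sel)
    (CA : Matrix (Fin mA) (Fin r) ℝ) (CB : Matrix (Fin mB) (Fin r) ℝ)
    (hCA : CA = ((Matrix.fromBlocks A 0 0 B).submatrix id sel).submatrix Sum.inl id)
    (hCB : CB = ((Matrix.fromBlocks A 0 0 B).submatrix id sel).submatrix Sum.inr id)
    (CAp : Matrix (Fin r) (Fin mA) ℝ) (hMPA : IsMoorePenrose CA CAp)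
    (CBp : Matrix (Fin r) (Fin mB) ℝ) (hMPB : IsMoorePenrose CB CBp) :
    min ((∑ i ∈ Finset.univ.filter (fun i : Fin n => k - 1 ≤ (i : ℕ)), σA i ^ 2) /
          (∑ i ∈ Finset.univ.filter (fun i : Fin n => k ≤ (i : ℕ)), σA i ^ 2))
        ((∑ i ∈ Finset.univ.filter (fun i : Fin n => k - 1 ≤ (i : ℕ)), σB i ^ 2) /
          (∑ i ∈ Finset.univ.filter (fun i : Fin n => k ≤ (i : ℕ)), σB i ^ 2)) ≤
    max (frob (A - CA * CAp * A) ^ 2 /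
          (∑ i ∈ Finset.univ.filter (fun i : Fin n => k ≤ (i : ℕ)), σA i ^ 2))
        (frob (B - CB * CBp * B) ^ 2 /
          (∑ i ∈ Finset.univ.filter (fun i : Fin n => k ≤ (i : ℕ)), σB i ^ 2)) := by
  -- denominators are positive
  have hin : (⟨n - 1, by omega⟩ : Fin n) ∈
      Finset.univ.filter (fun i : Fin n => k ≤ (i : ℕ)) := by
    simp only [Finset.mem_filter, Finset.mem_univ, true_and]
    show k ≤ n - 1
    omega
  have hdenA : 0 < ∑ i ∈ Finset.univ.filter (fun i : Fin n => k ≤ (i : ℕ)), σA i ^ 2 := by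
    have hposA := sigma_pos A (mulVec_injective_of_rank A hA) σA hσA
    apply Finset.sum_pos' (fun i _ => sq_nonneg _)
    exact ⟨_, hin, pow_pos (hposA _) 2⟩
  have hdenB : 0 < ∑ i ∈ Finset.univ.filter (fun i : Fin n => k ≤ (i : ℕ)), σB i ^ 2 := by
    have hposB := sigma_pos B (mulVec_injective_of_rank B hB) σB hσB
    apply Finset.sum_pos' (fun i _ => sq_nonneg _)
    exact ⟨_, hin, pow_pos (hposB _) 2⟩
  -- count selected columns in each block
  have hcount : (Finset.univ.filter (fun j : Fin r => (sel j).isLeft)).card ≤ k - 1 ∨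
      (Finset.univ.filter (fun j : Fin r => ¬ (sel j).isLeft)).card ≤ k - 1 := by
    by_contra hcon
    push_neg at hcon
    have h1 := Finset.card_filter_add_card_filter_not
      (s := (Finset.univ : Finset (Fin r))) (p := fun j => (sel j).isLeft)
    rw [Finset.card_univ, Fintype.card_fin] at h1
    simp only [ne_eq] at h1 hcon ⊢
    omega
  rcases hcount with hc | hc
  · -- few columns from the A block
    have hmain : ∑ i ∈ Finset.univ.filter (fun i : Fin n => k - 1 ≤ (i : ℕ)), σA i ^ 2
        ≤ frob (A - CA * CAp * A) ^ 2 := by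
      have hcard : Fintype.card {j : Fin r // (sel j).isLeft} ≤ k - 1 := by
        rwa [Fintype.card_subtype]
      apply side_bound hkn A hA σA hσA
        (fun j : {j : Fin r // (sel j).isLeft} => (sel j.1).getLeft j.2)
        ?_ hcard CA (fun j' j => if (j' : Fin r) = j then 1 else 0) ?_ CAp hMPA
      · -- injectivity
        intro j j' hjj
        rcases hj : sel j.1 with c | c
        · rcases hj' : sel j'.1 with c' | c'
          · apply Subtype.ext
            apply hsel
            rw [hj, hj']
            simp only [hj, hj', Sum.getLeft_inl] at hjj
            rw [hjj]
          · exact absurd j'.2 (by rw [hj']; simp)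
        · exact absurd j.2 (by rw [hj]; simp)
      · -- CA factors
        rw [hCA]
        ext i j
        erw [Matrix.mul_apply]
        simp only [Matrix.submatrix_apply, id_eq]
        rcases hj : sel j with c | c
        · rw [Matrix.fromBlocks_apply₁₁]
          rw [Finset.sum_eq_single (⟨j, by rw [hj]; simp⟩ : {j : Fin r // (sel j).isLeft})]
          · simp only [if_pos rfl, mul_one]
            simp [hj]
          · intro b _ hb
            rw [if_neg, mul_zero]
            intro hbj
            exact hb (Subtype.ext hbj)
          · intro h; exact absurd (Finset.mem_univ _) h
        · rw [Matrix.fromBlocks_apply₁₂]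
          rw [Matrix.zero_apply]
          symm
          apply Finset.sum_eq_zero
          intro b _
          rw [if_neg, mul_zero]
          intro hbj
          have := b.2
          rw [hbj, hj] at this
          simp at this
    have hA1 : (∑ i ∈ Finset.univ.filter (fun i : Fin n => k - 1 ≤ (i : ℕ)), σA i ^ 2) /
          (∑ i ∈ Finset.univ.filter (fun i : Fin n => k ≤ (i : ℕ)), σA i ^ 2)
        ≤ frob (A - CA * CAp * A) ^ 2 /
          (∑ i ∈ Finset.univ.filter (fun i : Fin n => k ≤ (i : ℕ)), σA i ^ 2) :=
      (div_le_div_iff_of_pos_right hdenA).mpr hmain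
    exact le_trans (min_le_left _ _) (le_trans hA1 (le_max_left _ _))
  · -- few columns from the B block
    have hmain : ∑ i ∈ Finset.univ.filter (fun i : Fin n => k - 1 ≤ (i : ℕ)), σB i ^ 2
        ≤ frob (B - CB * CBp * B) ^ 2 := by
      have hcard : Fintype.card {j : Fin r // (sel j).isRight} ≤ k - 1 := by
        rw [Fintype.card_subtype]
        have heq : Finset.univ.filter (fun j : Fin r => (sel j).isRight)
            = Finset.univ.filter (fun j : Fin r => ¬ (sel j).isLeft) := by
          apply Finset.filter_congr
          intro j _
          simp [Sum.not_isLeft]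
        rw [heq]
        exact hc
      apply side_bound hkn B hB σB hσB
        (fun j : {j : Fin r // (sel j).isRight} => (sel j.1).getRight j.2)
        ?_ hcard CB (fun j' j => if (j' : Fin r) = j then 1 else 0) ?_ CBp hMPB
      · intro j j' hjj
        rcases hj : sel j.1 with c | c
        · exact absurd j.2 (by rw [hj]; simp)
        · rcases hj' : sel j'.1 with c' | c'
          · exact absurd j'.2 (by rw [hj']; simp)
          · apply Subtype.ext
            apply hsel
            rw [hj, hj']
            simp only [hj, hj', Sum.getRight_inr] at hjj
            rw [hjj]
      · rw [hCB]
        ext i j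
        erw [Matrix.mul_apply]
        simp only [Matrix.submatrix_apply, id_eq]
        rcases hj : sel j with c | c
        · rw [Matrix.fromBlocks_apply₂₁]
          rw [Matrix.zero_apply]
          symm
          apply Finset.sum_eq_zero
          intro b _
          rw [if_neg, mul_zero]
          intro hbj
          have := b.2
          rw [hbj, hj] at this
          simp at this
        · rw [Matrix.fromBlocks_apply₂₂]
          rw [Finset.sum_eq_single (⟨j, by rw [hj]; simp⟩ : {j : Fin r // (sel j).isRight})]
          · simp only [if_pos rfl, mul_one]
            simp [hj]
          · intro b _ hb
            rw [if_neg, mul_zero]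
            intro hbj
            exact hb (Subtype.ext hbj)
          · intro h; exact absurd (Finset.mem_univ _) h
    have hB1 : (∑ i ∈ Finset.univ.filter (fun i : Fin n => k - 1 ≤ (i : ℕ)), σB i ^ 2) /
          (∑ i ∈ Finset.univ.filter (fun i : Fin n => k ≤ (i : ℕ)), σB i ^ 2)
        ≤ frob (B - CB * CBp * B) ^ 2 /
          (∑ i ∈ Finset.univ.filter (fun i : Fin n => k ≤ (i : ℕ)), σB i ^ 2) :=
      (div_le_div_iff_of_pos_right hdenB).mpr hmain
    exact le_trans (min_le_right _ _) (le_trans hB1 (le_max_right _ _))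
end

section
/- Let M ∈ ℝ^{m×n} (m ≥ n), Π a permutation matrix, and MΠ = QR a QR factorization with Q having orthonormal columns and R upper triangular, partitioned as R = [[R₁₁, R₁₂],[0, R₂₂]] with R₁₁ ∈ ℝ^{k×k}. If C = MΠ_k consists of the first k columns of MΠ and R₁₁ is invertible, then ‖M − P_C M‖_F = ‖R₂₂‖_F, where P_C is the orthogonal projection onto the column space of C. -/
open Matrix

private lemma sum_castLE {n k : ℕ} (hk : k ≤ n) (f : Fin n → ℝ)
    (hf : ∀ l : Fin n, k ≤ (l : ℕ) → f l = 0) :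
    ∑ l : Fin n, f l = ∑ l : Fin k, f (Fin.castLE hk l) := by
  classical
  have h1 : ∑ l : Fin k, f (Fin.castLE hk l)
      = ∑ l ∈ Finset.univ.map (Fin.castLEEmb hk), f l := by
    rw [Finset.sum_map]
    rfl
  rw [h1]
  refine (Finset.sum_subset (Finset.subset_univ _) ?_).symm
  intro x _ hx
  apply hf
  by_contra h
  push_neg at h
  exact hx (Finset.mem_map.mpr ⟨⟨x, h⟩, Finset.mem_univ _, rfl⟩)

private lemma frob_perm {m n : ℕ} (A : Matrix (Fin m) (Fin n) ℝ)
    (π : Equiv.Perm (Fin n)) : frob (A.submatrix id π) = frob A := by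
  unfold frob
  congr 1
  refine Finset.sum_congr rfl fun i _ => ?_
  exact Equiv.sum_comp π (fun j => A i j ^ 2)

private lemma frob_mul_orth {m n p : ℕ} (Q : Matrix (Fin m) (Fin n) ℝ)
    (hQ : Qᵀ * Q = 1) (A : Matrix (Fin n) (Fin p) ℝ) :
    frob (Q * A) = frob A := by
  unfold frob
  congr 1
  rw [Finset.sum_comm]
  conv_rhs => rw [Finset.sum_comm]
  refine Finset.sum_congr rfl fun j _ => ?_
  have h1 : ∑ i, (Q * A) i j ^ 2 = ((Q * A)ᵀ * (Q * A)) j j := by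
    simp [Matrix.mul_apply, sq, mul_comm]
  have h2 : ∑ i, A i j ^ 2 = (Aᵀ * A) j j := by
    simp [Matrix.mul_apply, sq, mul_comm]
  rw [h1, h2, Matrix.transpose_mul, Matrix.mul_assoc, ← Matrix.mul_assoc Qᵀ, hQ,
    Matrix.one_mul]

/-- If `MΠ = QR` is a QR factorization with `Q` having orthonormal columns and
`R` upper triangular with invertible leading `k × k` block `R₁₁`, and `C`
consists of the first `k` columns of `MΠ`, then
`‖M − P_C M‖_F = ‖R₂₂‖_F` where `P_C = C C⁺`. -/
theorem residual_eq_frob_R22 (m n k : ℕ) (hmn : n ≤ m) (hk : k ≤ n)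
    (M : Matrix (Fin m) (Fin n) ℝ) (π : Equiv.Perm (Fin n))
    (Q : Matrix (Fin m) (Fin n) ℝ) (hQ : Qᵀ * Q = 1)
    (R : Matrix (Fin n) (Fin n) ℝ)
    (hR : ∀ i j : Fin n, (j : ℕ) < (i : ℕ) → R i j = 0)
    (hQR : M.submatrix id π = Q * R)
    (hR11 : IsUnit (R.submatrix (Fin.castLE hk) (Fin.castLE hk)).det)
    (C : Matrix (Fin m) (Fin k) ℝ)
    (hC : C = (M.submatrix id π).submatrix id (Fin.castLE hk))
    (Cp : Matrix (Fin k) (Fin m) ℝ) (hMP : IsMoorePenrose C Cp) :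
    frob (M - C * Cp * M) =
      Real.sqrt (∑ i ∈ Finset.univ.filter (fun i : Fin n => k ≤ (i : ℕ)),
        ∑ j ∈ Finset.univ.filter (fun j : Fin n => k ≤ (j : ℕ)), R i j ^ 2) := by
  classical
  obtain ⟨hMP1, hMP2, hMP3, hMP4⟩ := hMP
  set Q1 : Matrix (Fin m) (Fin k) ℝ := Q.submatrix id (Fin.castLE hk) with hQ1def
  set R11 : Matrix (Fin k) (Fin k) ℝ :=
    R.submatrix (Fin.castLE hk) (Fin.castLE hk) with hR11def
  -- orthonormality of Q1
  have h1 : Q1ᵀ * Q1 = (1 : Matrix (Fin k) (Fin k) ℝ) := by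
    ext i j
    have h := congrFun (congrFun hQ (Fin.castLE hk i)) (Fin.castLE hk j)
    simp only [Matrix.mul_apply, Matrix.transpose_apply, Matrix.one_apply] at h ⊢
    simp only [hQ1def, Matrix.submatrix_apply, id]
    rw [h]
    by_cases hij : i = j
    · simp [hij]
    · rw [if_neg (fun hc => hij (Fin.castLE_injective hk hc)), if_neg hij]
  -- C = Q1 * R11
  have hC2 : C = Q1 * R11 := by
    ext i j
    rw [hC, hQR]
    simp only [Matrix.mul_apply, Matrix.submatrix_apply, id, hQ1def, hR11def]
    exact sum_castLE hk (fun l => Q i l * R l (Fin.castLE hk j))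
      (fun l hl => by
        have hjl : ((Fin.castLE hk j : Fin n) : ℕ) < (l : ℕ) := by simpa using lt_of_lt_of_le j.isLt hl
        show Q i l * R l (Fin.castLE hk j) = 0
        rw [hR l (Fin.castLE hk j) hjl, mul_zero])
  -- C*Cp is projection onto col(Q1)
  have hstep : C * Cp * (Q1 * R11) = Q1 * R11 := by rw [← hC2]; exact hMP1
  have hPQ1 : C * Cp * Q1 = Q1 := by
    calc C * Cp * Q1 = C * Cp * Q1 * R11 * R11⁻¹ :=
          (Matrix.mul_nonsing_inv_cancel_right _ _ hR11).symm
      _ = C * Cp * (Q1 * R11) * R11⁻¹ := by rw [Matrix.mul_assoc (C * Cp)]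
      _ = Q1 * R11 * R11⁻¹ := by rw [hstep]
      _ = Q1 := Matrix.mul_nonsing_inv_cancel_right _ _ hR11
  have hQ1tP : Q1ᵀ * (C * Cp) = Q1ᵀ := by
    have h := congrArg Matrix.transpose hPQ1
    rwa [Matrix.transpose_mul, hMP3] at h
  have hP : C * Cp = Q1 * Q1ᵀ := by
    have key : Q1 * (Q1ᵀ * (C * Cp)) = C * Cp := by
      rw [hC2, Matrix.mul_assoc Q1 R11 Cp, ← Matrix.mul_assoc Q1ᵀ, h1, Matrix.one_mul]
    rw [hQ1tP] at key
    exact key.symm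
  -- the residual is Q * R' with R' the lower block of R
  have hQ1Q : Q1ᵀ * Q = (1 : Matrix (Fin n) (Fin n) ℝ).submatrix (Fin.castLE hk) id := by
    ext i j
    have h := congrFun (congrFun hQ (Fin.castLE hk i)) j
    simp [Matrix.mul_apply, hQ1def] at h ⊢
    exact h
  have hS : (1 : Matrix (Fin n) (Fin n) ℝ).submatrix (Fin.castLE hk) id * R
      = R.submatrix (Fin.castLE hk) id := by
    ext i j
    simp [Matrix.mul_apply, Matrix.one_apply, ite_mul]
  set R' : Matrix (Fin n) (Fin n) ℝ :=
    Matrix.of (fun i j => if (i : ℕ) < k then 0 else R i j) with hR'def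
  have hmain : M.submatrix id π - Q1 * Q1ᵀ * (M.submatrix id π) = Q * R' := by
    rw [hQR, Matrix.mul_assoc Q1 Q1ᵀ (Q * R), ← Matrix.mul_assoc Q1ᵀ Q R, hQ1Q, hS]
    ext i j
    simp only [Matrix.sub_apply, Matrix.mul_apply, Matrix.submatrix_apply, id_eq,
      Matrix.of_apply, hR'def, hQ1def]
    have hsplit : ∑ l : Fin k, Q i (Fin.castLE hk l) * R (Fin.castLE hk l) j
        = ∑ l : Fin n, Q i l * (if (l : ℕ) < k then R l j else 0) := by
      rw [sum_castLE hk _ (fun l hl => by simp [Nat.not_lt.mpr hl])]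
      refine Finset.sum_congr rfl fun l _ => ?_
      simp [l.isLt]
    rw [hsplit, ← Finset.sum_sub_distrib]
    refine Finset.sum_congr rfl fun l _ => ?_
    by_cases hl : (l : ℕ) < k
    · simp [hl]
    · simp [hl]
  -- put everything together
  have hsub : (M - C * Cp * M).submatrix id π = Q * R' := by
    rw [← hmain, hP]
    ext i j
    simp [Matrix.mul_apply]
  rw [← frob_perm (M - C * Cp * M) π, hsub, frob_mul_orth Q hQ]
  unfold frob
  congr 1
  rw [Finset.sum_filter]
  refine Finset.sum_congr rfl fun i _ => ?_
  by_cases hi : (i : ℕ) < k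
  · simp [hR'def, hi, Nat.not_le.mpr hi]
  · rw [if_pos (Nat.le_of_not_lt hi), Finset.sum_filter]
    refine Finset.sum_congr rfl fun j _ => ?_
    by_cases hj : k ≤ (j : ℕ)
    · simp [hR'def, hi, hj]
    · have h0 : R i j = 0 := hR i j (lt_of_lt_of_le (Nat.lt_of_not_le hj) (Nat.le_of_not_lt hi))
      simp [hR'def, hi, hj, h0]
end
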